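/- Let x be a sequence of length m with distinct elements, i ∈ {1,...,m-1} with x[i] < x[i+1], and y = τ(x,i). Then SN_y[i] ∈ {0,...,SN_x[i]}, SN_y[i+1] = SN_x[i] - SN_y[i] + 1, and if ref_x(i+1) is defined then SN_y[ref_x(i+1)] = SN_x[ref_x(i+1)] - 1. -/

import Mathlib

/-- Binary tree shapes (Cartesian trees are determined by their shape). -/
inductive BTree : Type
  | nil : BTree
  | node : BTree → BTree → BTree
deriving DecidableEq

namespace BTree

/-- Number of nodes. -/
def size : BTree → ℕ
  | nil => 0
  | node l r => size l + size r + 1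

/-- Length of the leftmost path. -/
def LMP : BTree → ℕ
  | nil => 0
  | node l _ => LMP l + 1

/-- Length of the rightmost path. -/
def RMP : BTree → ℕ
  | nil => 0
  | node _ r => RMP r + 1

end BTree

/-- Minimum value of a list (0 for the empty list). -/
def listMin : List ℤ → ℤ
  | [] => 0
  | a :: t => t.foldl min a

/-- Index (0-based) of the minimum of a list. -/
def minIdx (l : List ℤ) : ℕ := l.idxOf (listMin l)

/-- Cartesian tree of a list, with fuel for termination. -/
def ctreeAux : ℕ → List ℤ → BTree
  | 0, _ => .nil
  | _ + 1, [] => .nil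
  | n + 1, a :: t =>
      let g := minIdx (a :: t)
      .node (ctreeAux n ((a :: t).take g)) (ctreeAux n ((a :: t).drop (g + 1)))

/-- Cartesian tree of a list: the root is the position of the minimum,
its subtrees are the Cartesian trees of the prefix and suffix around it. -/
def ctreeL (l : List ℤ) : BTree := ctreeAux l.length l

/-- The factor x[a..b] (1-based positions) of a sequence, as a list. -/
def seqList (x : ℕ → ℤ) (a b : ℕ) : List ℤ :=
  (List.range (b + 1 - a)).map (fun k => x (a + k))

/-- Cartesian tree of the sequence x[1..m]. -/
def ctreeOf (m : ℕ) (x : ℕ → ℤ) : BTree := ctreeL (seqList x 1 m)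

/-- Positions j < h (1-based) with x[j] < x[h]. -/
def PDset (x : ℕ → ℤ) (h : ℕ) : Finset ℕ :=
  (Finset.Ico 1 h).filter (fun j => x j < x h)

/-- Parent-distance table: PD_x[h] = h - max{j < h : x[j] < x[h]}, 0 if no such j. -/
def PD (x : ℕ → ℤ) (h : ℕ) : ℕ :=
  if hs : (PDset x h).Nonempty then h - (PDset x h).max' hs else 0

/-- Positions h < j ≤ m with x[j] < x[h]. -/
def RPDset (m : ℕ) (x : ℕ → ℤ) (h : ℕ) : Finset ℕ :=
  (Finset.Ioc h m).filter (fun j => x j < x h)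

/-- Reverse parent-distance table: RPD_x[h] = min{j > h : x[j] < x[h]} - h, 0 if no such j. -/
def RPD (m : ℕ) (x : ℕ → ℤ) (h : ℕ) : ℕ :=
  if hs : (RPDset m x h).Nonempty then (RPDset m x h).min' hs - h else 0

/-- Referent of h: the smallest position j > h with x[j] < x[h], or -1 if none. -/
def refD (m : ℕ) (x : ℕ → ℤ) (h : ℕ) : ℤ :=
  if hs : (RPDset m x h).Nonempty then ((RPDset m x h).min' hs : ℤ) else -1

/-- Skipped-number table: SN_x[h] is the number of nodes on the rightmost path of the
left subtree of node h in C(x), i.e. the number of positions whose referent is h. -/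
def SN (m : ℕ) (x : ℕ → ℤ) (h : ℕ) : ℕ :=
  ((Finset.Ico 1 h).filter (fun j => refD m x j = (h : ℤ))).card

/-- The swap τ(x,i): exchange the entries at positions i and i+1. -/
def swapAt (x : ℕ → ℤ) (i : ℕ) : ℕ → ℤ :=
  fun j => if j = i then x (i + 1) else if j = i + 1 then x i else x j

/-- ng(T,i): the Cartesian trees obtained from a sequence realizing T by one swap
at position i (valid positions are 1 ≤ i ≤ m-1). -/
def ngi (m : ℕ) (T : BTree) (i : ℕ) : Set BTree :=
  { S | 1 ≤ i ∧ i + 1 ≤ m ∧ ∃ x : ℕ → ℤ, Set.InjOn x (Set.Icc 1 m) ∧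
        ctreeOf m x = T ∧ S = ctreeOf m (swapAt x i) }

/-- ng(T): the swap neighbourhood of T. -/
def ng (m : ℕ) (T : BTree) : Set BTree := ⋃ i, ngi m T i

/-- Number of permutations of {1,...,n} whose Cartesian tree is A. -/
noncomputable def permCount (n : ℕ) (A : BTree) : ℕ :=
  Set.ncard { σ : Equiv.Perm (Fin n) |
    ctreeL (List.ofFn (fun k : Fin n => ((σ k : ℕ) : ℤ) + 1)) = A }

/-- Product over all nodes t of A of the size of the subtree rooted at t. -/
def hookProd : BTree → ℕ
  | .nil => 1
  | .node l r => (BTree.node l r).size * hookProd l * hookProd r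

/-! After the swap `ref_y(i) = i + 1`, and a position `j < i` with `ref_x(j) = i` keeps
referent `i` when `x (i + 1) < x j` and moves to `i + 1` otherwise: the positions counted by
`SN_x[i]` are split between `SN_y[i]` and `SN_y[i + 1]`, which also counts `i`.
For `r = ref_x(i + 1)`, the transposition `(i i+1)` maps the positions with `ref_y = r` onto those
with `ref_x = r` other than `i + 1`: position `i + 1` in `y` and position `i` in `x` both point to
`r` exactly when `x r < x i`, while `i` in `y` points to `i + 1`. -/

open Finset

lemma swapAt_apply (x : ℕ → ℤ) (i j : ℕ) : swapAt x i j = x (Equiv.swap i (i + 1) j) := by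
  simp only [swapAt, Equiv.swap_apply_def]
  split_ifs <;> rfl

lemma refD_eq_natCast_iff {m j k : ℕ} {x : ℕ → ℤ} :
    refD m x j = k ↔ j < k ∧ k ≤ m ∧ x k < x j ∧ ∀ l, j < l → l < k → x j ≤ x l := by
  have hmem : ∀ l, l ∈ RPDset m x j ↔ j < l ∧ l ≤ m ∧ x l < x j := fun l => by
    simp [RPDset, and_assoc]
  unfold refD
  split_ifs with hs
  · rw [Nat.cast_inj, ← (isLeast_min' _ hs).isLeast_iff_eq, IsLeast, mem_lowerBounds]
    simp only [mem_coe, hmem]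
    constructor
    · rintro ⟨⟨hjk, hkm, hk⟩, hleast⟩
      refine ⟨hjk, hkm, hk, fun l hjl hlk => ?_⟩
      by_contra! hl
      exact absurd (hleast l ⟨hjl, by omega, hl⟩) (by omega)
    · rintro ⟨hjk, hkm, hk, hbetween⟩
      refine ⟨⟨hjk, hkm, hk⟩, fun l ⟨hjl, _, hl⟩ => ?_⟩
      by_contra! hlk
      exact absurd (hbetween l hjl hlk) (not_le.2 hl)
  · refine iff_of_false (fun h => by omega) ?_
    rintro ⟨hjk, hkm, hk, -⟩
    exact hs ⟨k, (hmem k).2 ⟨hjk, hkm, hk⟩⟩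

lemma refD_congr {m j : ℕ} {x y : ℕ → ℤ} (h : ∀ l, j ≤ l → y l = x l) :
    refD m y j = refD m x j := by
  have hset : RPDset m y j = RPDset m x j :=
    filter_congr fun l hl => by rw [h l (mem_Ioc.1 hl).1.le, h j le_rfl]
  unfold refD
  rw [hset]

lemma forall_Ioo_swap_iff {P : ℕ → Prop} {a b i : ℕ} (ha : a < i) (hb : i + 1 < b) :
    (∀ l, a < l → l < b → P (Equiv.swap i (i + 1) l)) ↔ ∀ l, a < l → l < b → P l := by
  have hσ : ∀ l, a < l → l < b → a < Equiv.swap i (i + 1) l ∧ Equiv.swap i (i + 1) l < b := by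
    intro l hal hlb
    rw [Equiv.swap_apply_def]
    split_ifs <;> omega
  constructor
  · intro h l hal hlb
    simpa using h _ (hσ l hal hlb).1 (hσ l hal hlb).2
  · exact fun h l hal hlb => h _ (hσ l hal hlb).1 (hσ l hal hlb).2

lemma refD_eq_iff_of_refD_succ_eq {m i r : ℕ} {x : ℕ → ℤ} (hlt : x i < x (i + 1))
    (hr : refD m x (i + 1) = r) : refD m x i = r ↔ x r < x i := by
  obtain ⟨hir, hrm, -, hbetween⟩ := refD_eq_natCast_iff.1 hr
  rw [refD_eq_natCast_iff]
  refine ⟨fun h => h.2.2.1, fun hri => ⟨by omega, hrm, hri, fun l hil hlr => ?_⟩⟩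
  rcases (show l = i + 1 ∨ i + 1 < l by omega) with rfl | hl
  · exact hlt.le
  · exact hlt.le.trans (hbetween l hl hlr)

section Swap

variable {m i : ℕ} {x : ℕ → ℤ}

@[simp] lemma swapAt_self : swapAt x i i = x (i + 1) := by simp [swapAt]

@[simp] lemma swapAt_succ : swapAt x i (i + 1) = x i := by simp [swapAt]

lemma swapAt_of_lt {j : ℕ} (hj : j < i) : swapAt x i j = x j := by
  simp [swapAt, hj.ne, show j ≠ i + 1 by omega]

lemma swapAt_of_succ_lt {j : ℕ} (hj : i + 1 < j) : swapAt x i j = x j := by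
  simp [swapAt, show j ≠ i by omega, hj.ne']

lemma refD_swapAt_self (him : i + 1 ≤ m) (hlt : x i < x (i + 1)) :
    refD m (swapAt x i) i = (i + 1 : ℕ) := by
  rw [refD_eq_natCast_iff, swapAt_self, swapAt_succ]
  exact ⟨by omega, him, hlt, fun l _ _ => by omega⟩

lemma refD_swapAt_of_succ_lt {j : ℕ} (hj : i + 1 < j) :
    refD m (swapAt x i) j = refD m x j :=
  refD_congr fun _ hl => swapAt_of_succ_lt (hj.trans_le hl)

lemma refD_swapAt_eq_iff_of_lt {j r : ℕ} (hj : j < i) (hr : i + 1 < r) :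
    refD m (swapAt x i) j = r ↔ refD m x j = r := by
  simp only [refD_eq_natCast_iff, swapAt_apply,
    Equiv.swap_apply_of_ne_of_ne (show j ≠ i by omega) (show j ≠ i + 1 by omega),
    Equiv.swap_apply_of_ne_of_ne (show r ≠ i by omega) (show r ≠ i + 1 by omega),
    forall_Ioo_swap_iff (P := fun l => x j ≤ x l) hj hr]

lemma refD_swapAt_eq_self_iff {j : ℕ} (hj : j < i) (hlt : x i < x (i + 1)) :
    refD m (swapAt x i) j = i ↔ refD m x j = i ∧ x (i + 1) < x j := by
  simp +contextual only [refD_eq_natCast_iff, swapAt_of_lt, swapAt_self, swapAt_of_lt hj]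
  constructor
  · rintro ⟨hji, him, hi, hbetween⟩
    exact ⟨⟨hji, him, hlt.trans hi, hbetween⟩, hi⟩
  · rintro ⟨⟨hji, him, -, hbetween⟩, hi⟩
    exact ⟨hji, him, hi, hbetween⟩

lemma refD_swapAt_eq_succ_iff {j : ℕ} (hj : j < i) (him : i + 1 ≤ m) :
    refD m (swapAt x i) j = (i + 1 : ℕ) ↔ refD m x j = i ∧ x j ≤ x (i + 1) := by
  simp only [refD_eq_natCast_iff, swapAt_succ, swapAt_of_lt hj]
  constructor
  · rintro ⟨-, -, hi, hbetween⟩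
    refine ⟨⟨hj, by omega, hi, fun l hjl hli => ?_⟩, by simpa using hbetween i hj (by omega)⟩
    simpa [swapAt_of_lt hli] using hbetween l hjl (by omega)
  · rintro ⟨⟨-, -, hi, hbetween⟩, hle⟩
    refine ⟨by omega, him, hi, fun l hjl hli => ?_⟩
    rcases (show l < i ∨ l = i by omega) with hl | rfl
    · rw [swapAt_of_lt hl]
      exact hbetween l hjl hl
    · rwa [swapAt_self]

lemma refD_swapAt_succ_eq_iff {r : ℕ} (hlt : x i < x (i + 1)) (hr : refD m x (i + 1) = r) :
    refD m (swapAt x i) (i + 1) = r ↔ x r < x i := by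
  obtain ⟨hir, hrm, -, hbetween⟩ := refD_eq_natCast_iff.1 hr
  rw [refD_eq_natCast_iff, swapAt_succ, swapAt_of_succ_lt hir]
  refine ⟨fun h => h.2.2.1, fun hri => ⟨hir, hrm, hri, fun l hl hlr => ?_⟩⟩
  rw [swapAt_of_succ_lt hl]
  exact hlt.le.trans (hbetween l hl hlr)

lemma refD_swapAt_eq_iff_of_refD_succ_eq {j r : ℕ} (hlt : x i < x (i + 1))
    (hr : refD m x (i + 1) = r) (hj : j ≠ i) :
    refD m (swapAt x i) j = r ↔ refD m x (Equiv.swap i (i + 1) j) = r := by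
  have hir : i + 1 < r := (refD_eq_natCast_iff.1 hr).1
  rcases (show j < i ∨ j = i + 1 ∨ i + 1 < j by omega) with hj | rfl | hj
  · rw [Equiv.swap_apply_of_ne_of_ne hj.ne (by omega), refD_swapAt_eq_iff_of_lt hj hir]
  · rw [Equiv.swap_apply_right, refD_eq_iff_of_refD_succ_eq hlt hr, refD_swapAt_succ_eq_iff hlt hr]
  · rw [Equiv.swap_apply_of_ne_of_ne (by omega) hj.ne', refD_swapAt_of_succ_lt hj]

lemma SN_swapAt_self (hlt : x i < x (i + 1)) :
    SN m (swapAt x i) i = #{j ∈ {j ∈ Ico 1 i | refD m x j = i} | x (i + 1) < x j} := by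
  unfold SN
  rw [filter_filter]
  congr 1
  exact filter_congr fun j hj => refD_swapAt_eq_self_iff (mem_Ico.1 hj).2 hlt

lemma SN_swapAt_succ (hi1 : 1 ≤ i) (him : i + 1 ≤ m) (hlt : x i < x (i + 1)) :
    SN m (swapAt x i) (i + 1) = #{j ∈ {j ∈ Ico 1 i | refD m x j = i} | ¬x (i + 1) < x j} + 1 := by
  unfold SN
  rw [Nat.Ico_succ_right_eq_insert_Ico hi1, filter_insert, if_pos (refD_swapAt_self him hlt),
    card_insert_of_notMem (by simp), filter_filter]
  congr 2
  exact filter_congr fun j hj => by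
    rw [refD_swapAt_eq_succ_iff (mem_Ico.1 hj).2 him, not_lt]

lemma SN_swapAt_of_refD_succ_eq {r : ℕ} (hi1 : 1 ≤ i) (him : i + 1 ≤ m)
    (hlt : x i < x (i + 1)) (hr : refD m x (i + 1) = r) :
    SN m (swapAt x i) r = SN m x r - 1 := by
  have hir : i + 1 < r := (refD_eq_natCast_iff.1 hr).1
  have hset : {j ∈ Ico 1 r | refD m (swapAt x i) j = r} =
      ({j ∈ Ico 1 r | refD m x j = r}.erase (i + 1)).map (Equiv.swap i (i + 1)).toEmbedding := by
    ext j
    simp only [mem_map_equiv, Equiv.symm_swap, mem_erase, mem_filter, mem_Ico]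
    by_cases hj : j = i
    · subst hj
      simp only [refD_swapAt_self him hlt, Nat.cast_inj, Equiv.swap_apply_left, ne_eq,
        not_true_eq_false, false_and, iff_false, not_and]
      omega
    · have hσ : Equiv.swap i (i + 1) j ≠ i + 1 ∧
          (1 ≤ Equiv.swap i (i + 1) j ∧ Equiv.swap i (i + 1) j < r ↔ 1 ≤ j ∧ j < r) := by
        rw [Equiv.swap_apply_def]
        split_ifs <;> omega
      rw [refD_swapAt_eq_iff_of_refD_succ_eq hlt hr hj, hσ.2]
      exact ⟨fun h => ⟨hσ.1, h⟩, fun h => h.2⟩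
  unfold SN
  rw [hset, card_map, card_erase_of_mem (by simp [hr, hir])]

end Swap

theorem stmt17_general (m i : ℕ) (x : ℕ → ℤ)
    (hi1 : 1 ≤ i) (him : i + 1 ≤ m) (hlt : x i < x (i + 1)) :
    SN m (swapAt x i) i ≤ SN m x i ∧
    SN m (swapAt x i) (i + 1) = SN m x i - SN m (swapAt x i) i + 1 ∧
    ∀ r : ℕ, refD m x (i + 1) = (r : ℤ) →
      SN m (swapAt x i) r = SN m x r - 1 := by
  have hsplit : _ = SN m x i := card_filter_add_card_filter_not (fun j => x (i + 1) < x j)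
  refine ⟨?_, ?_, fun r hr => SN_swapAt_of_refD_succ_eq hi1 him hlt hr⟩
  · rw [SN_swapAt_self hlt]
    exact card_filter_le _ _
  · rw [SN_swapAt_succ hi1 him hlt, SN_swapAt_self hlt]
    omega

theorem stmt17 (m i : ℕ) (x : ℕ → ℤ) (hx : Set.InjOn x (Set.Icc 1 m))
    (hi1 : 1 ≤ i) (him : i + 1 ≤ m) (hlt : x i < x (i + 1)) :
    SN m (swapAt x i) i ≤ SN m x i ∧
    SN m (swapAt x i) (i + 1) = SN m x i - SN m (swapAt x i) i + 1 ∧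
    ∀ r : ℕ, refD m x (i + 1) = (r : ℤ) →
      SN m (swapAt x i) r = SN m x r - 1 :=
  stmt17_general m i x hi1 him hlt
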